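/- Suppose A ∈ ℝ^{n×n}, B ∈ ℝ^{n×m}, η, β > 0, and assume: (i) there exists K* ∈ ℝ^{m×n} with (η/(η+β))‖A+BK*‖₂ + (β/(η+β))‖A‖₂ = δ < 1. Let K = -(η/(η+β))(BᵀB)†BᵀA. Then the closed-loop system x_{t+1} = (A+BK)x_t satisfies ‖x_{t+1}‖₂ ≤ δ‖x_t‖₂ for all t, hence ‖x_t‖₂ ≤ δ^t ‖x₀‖₂ decays exponentially. -/

import Mathlib

open Matrix

/-- The four Penrose conditions characterizing the Moore–Penrose pseudoinverse `P` of `A`. -/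
def IsMoorePenrose {k l : Type*} [Fintype k] [Fintype l]
    (A : Matrix k l ℝ) (P : Matrix l k ℝ) : Prop :=
  A * P * A = A ∧ P * A * P = P ∧ (A * P)ᵀ = A * P ∧ (P * A)ᵀ = P * A

/-- The Euclidean (ℓ²) norm of a vector in `ℝ^n`. -/
noncomputable def vecNorm {k : Type*} [Fintype k] (v : k → ℝ) : ℝ :=
  Real.sqrt (∑ i, (v i) ^ 2)

/-- The ℓ²→ℓ² operator (spectral) norm of a real matrix. -/
noncomputable def opNorm2 {k l : ℕ} (M : Matrix (Fin k) (Fin l) ℝ) : ℝ :=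
  ‖LinearMap.toContinuousLinearMap (Matrix.toEuclideanLin M)‖

/-!
`B (BᵀB)† Bᵀ` is the orthogonal projection onto the column space of `B`, so `1 - B (BᵀB)† Bᵀ`
is a contraction that kills `B`. Hence `A - B (BᵀB)† BᵀA = (1 - B (BᵀB)† Bᵀ)(A + BK*)` has norm
at most `‖A + BK*‖` for every `K*`, and the closed-loop matrix `A + BK` is the convex combination
`(β/(η+β)) A + (η/(η+β)) (A - B (BᵀB)† BᵀA)`, whose norm is therefore at most `δ`.
-/

open scoped Matrix.Norms.L2Operator

namespace IsMoorePenrose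

variable {k l j : Type*} [Fintype k] [Fintype l] [Fintype j] [DecidableEq j]
  {B : Matrix k l ℝ} {P : Matrix l l ℝ}

theorem mul_mul_transpose_mul_cancel (hP : IsMoorePenrose (Bᵀ * B) P) : B * P * Bᵀ * B = B := by
  have hgram : Bᵀ * (B * (P * (Bᵀ * B))) = Bᵀ * B := by
    simpa only [Matrix.mul_assoc] using hP.1
  -- `E := B P BᵀB - B` satisfies `EᵀE = 0`.
  have hE : (B * P * Bᵀ * B - B)ᴴ * (B * P * Bᵀ * B - B) = 0 := by
    simp only [conjTranspose_eq_transpose_of_trivial, transpose_sub, transpose_mul,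
      transpose_transpose, Matrix.sub_mul, Matrix.mul_sub, Matrix.mul_assoc, hgram]
    abel
  exact sub_eq_zero.mp (conjTranspose_mul_self_eq_zero.mp hE)

theorem isStarProjection_mul_mul_transpose (hP : IsMoorePenrose (Bᵀ * B) P) :
    IsStarProjection (B * P * Bᵀ) where
  isIdempotentElem := by
    calc B * P * Bᵀ * (B * P * Bᵀ) = B * (P * (Bᵀ * B) * P) * Bᵀ := by
          simp only [Matrix.mul_assoc]
      _ = B * P * Bᵀ := by rw [hP.2.1]
  isSelfAdjoint := by
    have hcancel := hP.mul_mul_transpose_mul_cancel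
    have hcancelT : Bᵀ * (B * (Pᵀ * Bᵀ)) = Bᵀ := by
      simpa only [transpose_mul, transpose_transpose, Matrix.mul_assoc]
        using congrArg transpose hcancel
    calc (B * P * Bᵀ)ᴴ = B * P * Bᵀ * B * Pᵀ * Bᵀ := by
          rw [hcancel, conjTranspose_eq_transpose_of_trivial]
          simp only [transpose_mul, transpose_transpose, Matrix.mul_assoc]
      _ = B * P * Bᵀ := by simp only [Matrix.mul_assoc, hcancelT]

theorem norm_sub_mul_mul_transpose_mul_le [DecidableEq k]
    (hP : IsMoorePenrose (Bᵀ * B) P) (A : Matrix k j ℝ) (K' : Matrix l j ℝ) :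
    ‖A - B * P * Bᵀ * A‖ ≤ ‖A + B * K'‖ := by
  have hQ : IsStarProjection (1 - B * P * Bᵀ) := hP.isStarProjection_mul_mul_transpose.one_sub
  have hQB : (1 - B * P * Bᵀ) * B = 0 := by
    rw [Matrix.sub_mul, Matrix.one_mul, hP.mul_mul_transpose_mul_cancel, sub_self]
  calc ‖A - B * P * Bᵀ * A‖ = ‖(1 - B * P * Bᵀ) * (A + B * K')‖ := by
        rw [Matrix.mul_add, ← Matrix.mul_assoc, hQB, Matrix.zero_mul, add_zero,
          Matrix.sub_mul, Matrix.one_mul]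
    _ ≤ ‖1 - B * P * Bᵀ‖ * ‖A + B * K'‖ := l2_opNorm_mul _ _
    _ ≤ ‖A + B * K'‖ := mul_le_of_le_one_left (norm_nonneg _) (hQ.norm_le _)

theorem norm_add_mul_neg_smul_le [DecidableEq k]
    (hP : IsMoorePenrose (Bᵀ * B) P) (A : Matrix k j ℝ) (K' : Matrix l j ℝ)
    {c : ℝ} (hc₀ : 0 ≤ c) (hc₁ : c ≤ 1) :
    ‖A + B * -(c • (P * Bᵀ * A))‖ ≤ c * ‖A + B * K'‖ + (1 - c) * ‖A‖ := by
  have hconvex : A + B * -(c • (P * Bᵀ * A)) = c • (A - B * P * Bᵀ * A) + (1 - c) • A := by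
    rw [Matrix.mul_neg, Matrix.mul_smul, smul_sub, sub_smul, one_smul]
    simp only [Matrix.mul_assoc]
    abel
  calc ‖A + B * -(c • (P * Bᵀ * A))‖ ≤ c * ‖A - B * P * Bᵀ * A‖ + (1 - c) * ‖A‖ := by
        rw [hconvex]
        refine (norm_add_le _ _).trans_eq ?_
        rw [norm_smul_of_nonneg hc₀, norm_smul_of_nonneg (sub_nonneg.mpr hc₁)]
    _ ≤ c * ‖A + B * K'‖ + (1 - c) * ‖A‖ := by
        gcongr
        exact hP.norm_sub_mul_mul_transpose_mul_le A K'

end IsMoorePenrose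

theorem vecNorm_mulVec_le {k l : ℕ} (M : Matrix (Fin k) (Fin l) ℝ) (v : Fin l → ℝ) :
    vecNorm (M *ᵥ v) ≤ opNorm2 M * vecNorm v := by
  have hvec {k : ℕ} (w : Fin k → ℝ) : vecNorm w = ‖WithLp.toLp 2 w‖ := by
    simp [vecNorm, EuclideanSpace.norm_eq, sq_abs]
  rw [hvec, hvec]
  exact l2_opNorm_mulVec M (WithLp.toLp 2 v)

theorem stmt_5_general {n m : ℕ} (A : Matrix (Fin n) (Fin n) ℝ) (B : Matrix (Fin n) (Fin m) ℝ)
    (η β : ℝ) (hη : 0 < η) (hβ : 0 < β)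
    (δ : ℝ) (Kstar : Matrix (Fin m) (Fin n) ℝ)
    (hδ : η / (η + β) * opNorm2 (A + B * Kstar) + β / (η + β) * opNorm2 A = δ)
    (P : Matrix (Fin m) (Fin m) ℝ) (hP : IsMoorePenrose (Bᵀ * B) P)
    (K : Matrix (Fin m) (Fin n) ℝ) (hK : K = -((η / (η + β)) • (P * Bᵀ * A)))
    (x : ℕ → Fin n → ℝ) (hx : ∀ t, x (t + 1) = (A + B * K).mulVec (x t)) :
    (∀ t, vecNorm (x (t + 1)) ≤ δ * vecNorm (x t)) ∧
    ∀ t, vecNorm (x t) ≤ δ ^ t * vecNorm (x 0) := by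
  have hηβ : 0 < η + β := hη.trans (lt_add_of_pos_right η hβ)
  have hweight : 1 - η / (η + β) = β / (η + β) := by field_simp; ring
  have hclosed : opNorm2 (A + B * K) ≤ δ := by
    have h := hP.norm_add_mul_neg_smul_le A Kstar (c := η / (η + β)) (by positivity)
      ((div_le_one hηβ).mpr (by linarith))
    rw [hweight, ← hK] at h
    exact hδ ▸ h
  have hδ₀ : 0 ≤ δ := (norm_nonneg _).trans hclosed
  have hstep (t : ℕ) : vecNorm (x (t + 1)) ≤ δ * vecNorm (x t) := by
    rw [hx t]
    exact (vecNorm_mulVec_le _ _).trans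
      (mul_le_mul_of_nonneg_right hclosed (Real.sqrt_nonneg _))
  exact ⟨hstep, fun t ↦ le_geom (u := fun t ↦ vecNorm (x t)) hδ₀ t fun s _ ↦ hstep s⟩

/-- if there exists `K*` with
`(η/(η+β))‖A+BK*‖₂ + (β/(η+β))‖A‖₂ = δ < 1`, then with
`K = -(η/(η+β))(BᵀB)†BᵀA` the closed loop `x_{t+1} = (A+BK)x_t` satisfies
`‖x_{t+1}‖₂ ≤ δ‖x_t‖₂` for all `t`, hence `‖x_t‖₂ ≤ δ^t ‖x₀‖₂`. -/
theorem stmt_5 {n m : ℕ} (A : Matrix (Fin n) (Fin n) ℝ) (B : Matrix (Fin n) (Fin m) ℝ)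
    (η β : ℝ) (hη : 0 < η) (hβ : 0 < β)
    (δ : ℝ) (Kstar : Matrix (Fin m) (Fin n) ℝ)
    (hδ : η / (η + β) * opNorm2 (A + B * Kstar) + β / (η + β) * opNorm2 A = δ)
    (hδ1 : δ < 1)
    (P : Matrix (Fin m) (Fin m) ℝ) (hP : IsMoorePenrose (Bᵀ * B) P)
    (K : Matrix (Fin m) (Fin n) ℝ) (hK : K = -((η / (η + β)) • (P * Bᵀ * A)))
    (x : ℕ → Fin n → ℝ) (hx : ∀ t, x (t + 1) = (A + B * K).mulVec (x t)) :
    (∀ t, vecNorm (x (t + 1)) ≤ δ * vecNorm (x t)) ∧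
    ∀ t, vecNorm (x t) ≤ δ ^ t * vecNorm (x 0) :=
  stmt_5_general A B η β hη hβ δ Kstar hδ P hP K hK x hx
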